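/- Assume Σ_j λ_j < ∞. Let V ⊆ H be a closed subspace of dimension m (possibly infinite) admitting an H-orthonormal basis (u_j)_{1≤j≤m} of V with ⟨ι u_i, ι u_j⟩_{L²(μ)} = λ_{j,V} δ_{ij} and λ_{1,V} ≥ λ_{2,V} ≥ … > 0. Then for every n ≤ m and every n-dimensional subspace V_n ⊆ V: ∫_Ω P_{V_n}(x)² dμ(x) ≥ Σ_{j≥1} λ_j − Σ_{j=1}^n λ_{j,V}, with equality when V_n = span(u_1,…,u_n); in particular ∫_Ω P_V(x)² dμ(x) = Σ_{j≥1} λ_j − Σ_{j=1}^m λ_{j,V}. -/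

import Mathlib

/-!
Expanding `k x` in the Hilbert basis `e` gives `‖k x‖² = Σ_j ⟪e_j, k x⟫²`, and the `j`-th term
integrates to `‖ι e_j‖² = λ_j`; likewise `∫ ‖P_W (k x)‖² = Σ_i ‖ι w_i‖²` for every Hilbert basis
`(w_i)` of a closed subspace `W`. By Pythagoras, `∫ ‖k x - P_W (k x)‖² = Σ_j λ_j - Σ_i ‖ι w_i‖²`,
which is the equality both for `W = V` and for `W = span(u_0, …, u_{n-1})`.

For an `n`-dimensional `V_n ⊆ V` with orthonormal basis `(w_i)`, expanding each `w_i` in the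
basis `u` gives `Σ_i ‖ι w_i‖² = Σ_j λ_{j,V} D_j` with `D_j = Σ_i ⟪u_j, w_i⟫² ∈ [0, 1]` (Bessel)
and `Σ_j D_j = n` (Parseval). Such a weighted sum is at most the sum of the `n` largest weights,
which gives the inequality (Ky Fan's maximum principle).
-/

open MeasureTheory
open scoped InnerProductSpace

theorem tsum_mul_le_sum_of_forall_le {J : Type*} {L D : J → ℝ} {s : Finset J}
    (hD0 : ∀ j, 0 ≤ D j) (hD1 : ∀ j, D j ≤ 1) (hD : HasSum D s.card)
    (hLD : Summable fun j => L j * D j) (hL : ∀ i ∉ s, ∀ j ∈ s, L i ≤ L j) :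
    ∑' j, L j * D j ≤ ∑ j ∈ s, L j := by
  rcases s.eq_empty_or_nonempty with rfl | hs
  · have hD_eq : D = 0 := (hasSum_zero_iff_of_nonneg hD0).1 (by simpa using hD)
    simp [hD_eq]
  set t := s.inf' hs L
  -- `(L j - t) * (D j - 1) ≤ 0` on `s` and `(L j - t) * D j ≤ 0` off `s`
  have hpointwise : ∀ j, L j * D j ≤ t * D j + (s : Set J).indicator (fun j => L j - t) j := by
    intro j
    by_cases hj : j ∈ s
    · have : t ≤ L j := s.inf'_le L hj
      rw [Set.indicator_of_mem (Finset.mem_coe.2 hj)]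
      nlinarith [hD1 j]
    · have : L j ≤ t := s.le_inf' hs L (hL j hj)
      rw [Set.indicator_of_notMem (mt Finset.mem_coe.1 hj)]
      nlinarith [hD0 j]
  have hbound : HasSum (fun j => t * D j + (s : Set J).indicator (fun j => L j - t) j)
      (t * s.card + ∑ j ∈ s, (L j - t)) := by
    refine (hD.mul_left t).add ?_
    rw [← Finset.sum_congr rfl fun j hj =>
      Set.indicator_of_mem (Finset.mem_coe.2 hj) (fun j => L j - t)]
    exact hasSum_sum_of_ne_finset_zero fun j hj =>
      Set.indicator_of_notMem (mt Finset.mem_coe.1 hj) _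
  calc ∑' j, L j * D j ≤ t * s.card + ∑ j ∈ s, (L j - t) :=
        hasSum_le hpointwise hLD.hasSum hbound
    _ = ∑ j ∈ s, L j := by rw [Finset.sum_sub_distrib, Finset.sum_const, nsmul_eq_mul]; ring

section Parseval

variable {H : Type*} [NormedAddCommGroup H] [InnerProductSpace ℝ H] {J : Type*}

theorem HilbertBasis.hasSum_inner_sq (b : HilbertBasis J ℝ H) (x : H) :
    HasSum (fun j => ⟪b j, x⟫_ℝ ^ 2) (‖x‖ ^ 2) := by
  simpa [sq, real_inner_comm x] using b.hasSum_inner_mul_inner x x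

variable {K : Submodule ℝ H} [CompleteSpace K]

theorem HilbertBasis.hasSum_inner_sq_starProjection (c : HilbertBasis J ℝ K) (x : H) :
    HasSum (fun j => ⟪(c j : H), x⟫_ℝ ^ 2) (‖K.starProjection x‖ ^ 2) := by
  have h := c.hasSum_inner_sq (K.orthogonalProjectionOnto x)
  simp only [Submodule.inner_orthogonalProjectionOnto_eq_of_mem_left] at h
  exact h

theorem HilbertBasis.hasSum_inner_sq_of_mem (c : HilbertBasis J ℝ K) {x : H} (hx : x ∈ K) :
    HasSum (fun j => ⟪(c j : H), x⟫_ℝ ^ 2) (‖x‖ ^ 2) := by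
  simpa [K.starProjection_eq_self_iff.2 hx] using c.hasSum_inner_sq_starProjection x

theorem HilbertBasis.hasSum_inner_smul_of_mem (c : HilbertBasis J ℝ K) {x : H} (hx : x ∈ K) :
    HasSum (fun j => ⟪(c j : H), x⟫_ℝ • (c j : H)) x := by
  simpa [K.starProjection_eq_self_iff.2 hx] using
    (c.hasSum_orthogonalProjectionOnto x).mapL K.subtypeL

theorem Orthonormal.exists_hilbertBasis_of_topologicalClosure_eq {w : J → H}
    (hw : Orthonormal ℝ w) (hK : (Submodule.span ℝ (Set.range w)).topologicalClosure = K) :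
    ∃ c : HilbertBasis J ℝ K, ∀ j, (c j : H) = w j := by
  have hwK : ∀ j, w j ∈ K := fun j =>
    hK.le (Submodule.le_topologicalClosure _ (Submodule.subset_span ⟨j, rfl⟩))
  set w' : J → K := fun j => ⟨w j, hwK j⟩
  have hw' : Orthonormal ℝ w' := K.subtypeₗᵢ.orthonormal_comp_iff.mp hw
  have hperp : (Submodule.span ℝ (Set.range w'))ᗮ = ⊥ := by
    refine (Submodule.eq_bot_iff _).2 fun z hz => ?_
    have hspan : Submodule.span ℝ (Set.range w) ≤ (innerSL ℝ (z : H)).ker :=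
      Submodule.span_le.2 <| Set.range_subset_iff.2 fun j =>
        (Submodule.mem_orthogonal' _ _).1 hz _ (Submodule.subset_span ⟨j, rfl⟩)
    have hKker : K ≤ (innerSL ℝ (z : H)).ker :=
      hK.ge.trans (Submodule.topologicalClosure_minimal _ hspan (innerSL ℝ (z : H)).isClosed_ker)
    exact Subtype.ext (inner_self_eq_zero.1 (hKker z.2))
  exact ⟨HilbertBasis.mkOfOrthogonalEqBot hw' hperp, fun j => by simp [w']⟩

theorem exists_hilbertBasis_restrict_of_inner_eq_ite [DecidableEq J] {s : Set J} {u : J → H} (hu : ∀ i ∈ s, ∀ j ∈ s, ⟪u i, u j⟫_ℝ = if i = j then 1 else 0)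
    (hK : (Submodule.span ℝ (u '' s)).topologicalClosure = K) :
    ∃ c : HilbertBasis s ℝ K, ∀ j, (c j : H) = u j := by
  have hon : Orthonormal ℝ (s.domRestrict u) := orthonormal_iff_ite.2 fun i j => by
    simpa [Subtype.ext_iff] using hu i i.2 j j.2
  exact hon.exists_hilbertBasis_of_topologicalClosure_eq (by rwa [Set.range_domRestrict])

end Parseval

section SquareIntegrable

variable {Ω : Type*} [MeasurableSpace Ω] {μ : Measure Ω}

theorem MeasureTheory.Lp.lintegral_ofReal_sq (f : Lp ℝ 2 μ) :
    ∫⁻ x, ENNReal.ofReal (f x ^ 2) ∂μ = ENNReal.ofReal (‖f‖ ^ 2) := by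
  have hint : Integrable (fun x => f x ^ 2) μ := by
    simpa [sq] using L2.integrable_inner (𝕜 := ℝ) f f
  rw [← real_inner_self_eq_norm_sq, L2.inner_def]
  simp only [real_inner_self_eq_norm_sq, Real.norm_eq_abs, sq_abs]
  rw [ofReal_integral_eq_lintegral_ofReal hint (Filter.Eventually.of_forall fun _ => sq_nonneg _)]

variable {I : Type*} [Countable I] {F : I → Lp ℝ 2 μ} {g : Ω → ℝ}

theorem aemeasurable_of_ae_hasSum_sq (hg : ∀ᵐ x ∂μ, HasSum (fun i => F i x ^ 2) (g x)) :
    AEMeasurable g μ :=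
  (AEMeasurable.tsum fun i => (Lp.aestronglyMeasurable (F i)).aemeasurable.pow_const 2).congr
    (hg.mono fun _ hx => hx.tsum_eq)

theorem lintegral_ofReal_of_ae_hasSum_sq (hg : ∀ᵐ x ∂μ, HasSum (fun i => F i x ^ 2) (g x)) :
    ∫⁻ x, ENNReal.ofReal (g x) ∂μ = ∑' i, ENNReal.ofReal (‖F i‖ ^ 2) := by
  have hae : (fun x => ENNReal.ofReal (g x)) =ᵐ[μ] fun x => ∑' i, ENNReal.ofReal (F i x ^ 2) := by
    filter_upwards [hg] with x hx
    rw [← hx.tsum_eq, ENNReal.ofReal_tsum_of_nonneg (fun i => sq_nonneg _) hx.summable]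
  rw [lintegral_congr_ae hae, lintegral_tsum fun i =>
    ((Lp.aestronglyMeasurable (F i)).aemeasurable.pow_const 2).ennreal_ofReal]
  exact tsum_congr fun i => Lp.lintegral_ofReal_sq (F i)

theorem integrable_of_ae_hasSum_sq (hg : ∀ᵐ x ∂μ, HasSum (fun i => F i x ^ 2) (g x))
    (hF : Summable fun i => ‖F i‖ ^ 2) : Integrable g μ := by
  refine ⟨(aemeasurable_of_ae_hasSum_sq hg).aestronglyMeasurable,
    (hasFiniteIntegral_iff_ofReal (hg.mono fun x hx => hx.nonneg fun i => sq_nonneg _)).2 ?_⟩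
  rw [lintegral_ofReal_of_ae_hasSum_sq hg,
    ← ENNReal.ofReal_tsum_of_nonneg (fun i => sq_nonneg _) hF]
  exact ENNReal.ofReal_lt_top

theorem hasSum_norm_sq_of_ae_hasSum_sq
    (hg : ∀ᵐ x ∂μ, HasSum (fun i => F i x ^ 2) (g x)) (hint : Integrable g μ) :
    HasSum (fun i => ‖F i‖ ^ 2) (∫ x, g x ∂μ) := by
  have hg0 : 0 ≤ᵐ[μ] g := hg.mono fun x hx => hx.nonneg fun i => sq_nonneg _
  have htsum : ∑' i, ENNReal.ofReal (‖F i‖ ^ 2) = ENNReal.ofReal (∫ x, g x ∂μ) := by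
    rw [← lintegral_ofReal_of_ae_hasSum_sq hg, ofReal_integral_eq_lintegral_ofReal hint hg0]
  have h := ENNReal.hasSum_toReal (htsum ▸ ENNReal.ofReal_ne_top)
  rwa [← ENNReal.tsum_toReal_eq fun i => ENNReal.ofReal_ne_top, htsum,
    ENNReal.toReal_ofReal (integral_nonneg_of_ae hg0),
    funext fun i => ENNReal.toReal_ofReal (sq_nonneg ‖F i‖)] at h

end SquareIntegrable

section KernelIntegral

variable {Ω : Type*} [MeasurableSpace Ω] {μ : Measure Ω}
  {H : Type*} [NormedAddCommGroup H] [InnerProductSpace ℝ H]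
  {k : Ω → H} {ι : H → Lp ℝ 2 μ} {I J : Type*} [Countable I] [Countable J]

theorem ae_hasSum_sq_of_hasSum_inner_sq (hι : ∀ f, ι f =ᵐ[μ] fun x => ⟪f, k x⟫_ℝ)
    {q : I → H} {g : Ω → ℝ} (hq : ∀ x, HasSum (fun i => ⟪q i, k x⟫_ℝ ^ 2) (g x)) :
    ∀ᵐ x ∂μ, HasSum (fun i => ι (q i) x ^ 2) (g x) := by
  filter_upwards [ae_all_iff.2 fun i => hι (q i)] with x hx
  simpa only [hx] using hq x

theorem integral_norm_sq_sub_starProjection (hι : ∀ f, ι f =ᵐ[μ] fun x => ⟪f, k x⟫_ℝ)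
    (b : HilbertBasis J ℝ H) (hb : Summable fun j => ‖ι (b j)‖ ^ 2)
    (K : Submodule ℝ H) [CompleteSpace K] (c : HilbertBasis I ℝ K) :
    ∫ x, ‖k x - K.starProjection (k x)‖ ^ 2 ∂μ
      = ∑' j, ‖ι (b j)‖ ^ 2 - ∑' i, ‖ι (c i)‖ ^ 2 := by
  have hnorm := ae_hasSum_sq_of_hasSum_inner_sq hι fun x => b.hasSum_inner_sq (k x)
  have hproj := ae_hasSum_sq_of_hasSum_inner_sq hι fun x =>
    c.hasSum_inner_sq_starProjection (k x)
  have hnorm_int := integrable_of_ae_hasSum_sq hnorm hb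
  have hproj_int : Integrable (fun x => ‖K.starProjection (k x)‖ ^ 2) μ :=
    hnorm_int.mono' (aemeasurable_of_ae_hasSum_sq hproj).aestronglyMeasurable
      (Filter.Eventually.of_forall fun x => by
        simpa using pow_le_pow_left₀ (norm_nonneg _) (K.norm_starProjection_apply_le (k x)) 2)
  have hpyth : ∀ x, ‖k x - K.starProjection (k x)‖ ^ 2
      = ‖k x‖ ^ 2 - ‖K.starProjection (k x)‖ ^ 2 := fun x => by
    rw [K.norm_sq_eq_add_norm_sq_starProjection (k x), K.starProjection_orthogonal_val]
    ring
  simp_rw [hpyth]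
  rw [integral_sub hnorm_int hproj_int,
    (hasSum_norm_sq_of_ae_hasSum_sq hnorm hnorm_int).tsum_eq,
    (hasSum_norm_sq_of_ae_hasSum_sq hproj hproj_int).tsum_eq]

end KernelIntegral

section KyFan

variable {H : Type*} [NormedAddCommGroup H] [InnerProductSpace ℝ H]
  {F : Type*} [NormedAddCommGroup F] [InnerProductSpace ℝ F] {K : Submodule ℝ H} [CompleteSpace K]

section

variable {J : Type*} [DecidableEq J] (c : HilbertBasis J ℝ K) (T : H →L[ℝ] F)
  {l : J → ℝ} (hT : ∀ i j, ⟪T (c i), T (c j)⟫_ℝ = if i = j then l j else 0)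
include hT

theorem HilbertBasis.hasSum_mul_inner_sq_of_mem {x : H} (hx : x ∈ K) :
    HasSum (fun j => l j * ⟪(c j : H), x⟫_ℝ ^ 2) (‖T x‖ ^ 2) := by
  have hTx : HasSum (fun j => ⟪(c j : H), x⟫_ℝ • T (c j)) (T x) := by
    simpa using (c.hasSum_inner_smul_of_mem hx).mapL T
  have hcoef : ∀ j, ⟪T (c j), T x⟫_ℝ = ⟪(c j : H), x⟫_ℝ * l j := fun j => by
    have h := hTx.mapL (innerSL ℝ (T (c j)))
    simp only [innerSL_apply_apply, inner_smul_right, hT, mul_ite, mul_zero] at h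
    simpa using h.unique (hasSum_single j fun j' hj' => if_neg (Ne.symm hj'))
  have h := hTx.mapL (innerSL ℝ (T x))
  simp only [innerSL_apply_apply, real_inner_comm _ (T x), real_inner_smul_left, hcoef,
    real_inner_self_eq_norm_sq] at h
  refine h.congr_fun fun j => ?_
  ring

theorem HilbertBasis.sum_norm_sq_apply_le {I : Type*} [Fintype I] {w : I → H}
    (hw : Orthonormal ℝ w) (hwK : ∀ i, w i ∈ K) {s : Finset J} (hs : s.card = Fintype.card I)
    (hl : ∀ i ∉ s, ∀ j ∈ s, l i ≤ l j) :
    ∑ i, ‖T (w i)‖ ^ 2 ≤ ∑ j ∈ s, l j := by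
  set D : J → ℝ := fun j => ∑ i, ⟪(c j : H), w i⟫_ℝ ^ 2
  have hD1 : ∀ j, D j ≤ 1 := fun j => by
    have hcj : ‖(c j : H)‖ = 1 := c.orthonormal.1 j
    simpa [D, real_inner_comm, hcj] using
      hw.sum_inner_products_le (c j : H) (s := Finset.univ)
  have hD : HasSum D s.card := by
    simpa [hw.1, hs] using hasSum_sum (s := Finset.univ) fun i _ => c.hasSum_inner_sq_of_mem (hwK i)
  have hLD : HasSum (fun j => l j * D j) (∑ i, ‖T (w i)‖ ^ 2) := by
    simpa [D, Finset.mul_sum] using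
      hasSum_sum (s := Finset.univ) fun i _ => c.hasSum_mul_inner_sq_of_mem T hT (hwK i)
  exact hLD.tsum_eq ▸ tsum_mul_le_sum_of_forall_le
    (fun j => Finset.sum_nonneg fun i _ => sq_nonneg _) hD1 hD hLD.summable hl

end

theorem HilbertBasis.sum_norm_sq_apply_le_sum_range {m : ℕ∞}
    (c : HilbertBasis {j : ℕ | (j : ℕ∞) < m} ℝ K) (T : H →L[ℝ] F) {l : ℕ → ℝ}
    (hT : ∀ i j : {j : ℕ | (j : ℕ∞) < m}, ⟪T (c i), T (c j)⟫_ℝ = if i = j then l j else 0)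
    (hl : ∀ j : ℕ, ((j + 1 : ℕ) : ℕ∞) < m → l (j + 1) ≤ l j) {n : ℕ} (hn : (n : ℕ∞) ≤ m)
    {I : Type*} [Fintype I] (hI : Fintype.card I = n) {w : I → H} (hw : Orthonormal ℝ w)
    (hwK : ∀ i, w i ∈ K) :
    ∑ i, ‖T (w i)‖ ^ 2 ≤ ∑ j ∈ Finset.range n, l j := by
  have hnS : ∀ j ∈ Finset.range n, j ∈ {j : ℕ | (j : ℕ∞) < m} := fun j hj =>
    lt_of_lt_of_le (Nat.cast_lt.2 (Finset.mem_range.1 hj)) hn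
  have hanti : AntitoneOn l {j : ℕ | (j : ℕ∞) < m} :=
    antitoneOn_of_add_one_le ((Set.ordConnected_Iio (a := m)).preimage_mono Nat.mono_cast)
      fun j _ _ hj => hl j hj
  rw [← Finset.sum_subtype_of_mem l hnS]
  refine c.sum_norm_sq_apply_le T hT hw hwK ?_ fun i hi j hj => hanti j.2 i.2 ?_
  · rw [Finset.card_subtype, Finset.filter_true_of_mem hnS, Finset.card_range, hI]
  · simp only [Finset.mem_subtype, Finset.mem_range, not_lt] at hi hj
    omega

end KyFan


theorem stmt13_general {H : Type*} [NormedAddCommGroup H] [InnerProductSpace ℝ H] [CompleteSpace H]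
    {Ω : Type*} [MeasurableSpace Ω] (μ : Measure Ω) (k : Ω → H)
    (ι : H →L[ℝ] Lp ℝ 2 μ)
    (hι : ∀ f : H, (ι f : Ω → ℝ) =ᵐ[μ] fun x => ⟪f, k x⟫_ℝ)
    (e : ℕ → H) (lam : ℕ → ℝ)
    (he : Orthonormal ℝ e)
    (hdense : (Submodule.span ℝ (Set.range e)).topologicalClosure = ⊤)
    (heig : ∀ i j, ⟪ι (e i), ι (e j)⟫_ℝ = if i = j then lam j else 0)
    (hsum : Summable lam)
    (V : Submodule ℝ H) (hVc : IsClosed (V : Set H))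
    (m : ℕ∞) (u : ℕ → H) (lamV : ℕ → ℝ)
    (huon : ∀ i j : ℕ, (i : ℕ∞) < m → (j : ℕ∞) < m →
      ⟪u i, u j⟫_ℝ = if i = j then 1 else 0)
    (huspan : (Submodule.span ℝ (u '' {j : ℕ | (j : ℕ∞) < m})).topologicalClosure = V)
    (hlamV : ∀ i j : ℕ, (i : ℕ∞) < m → (j : ℕ∞) < m →
      ⟪ι (u i), ι (u j)⟫_ℝ = if i = j then lamV j else 0)
    (hlamVmono : ∀ j : ℕ, ((j + 1 : ℕ) : ℕ∞) < m → lamV (j + 1) ≤ lamV j)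
    (n : ℕ) (hn : (n : ℕ∞) ≤ m) :
    (∀ (Vn : Submodule ℝ H) (p : H →ₗ[ℝ] H),
        Vn ≤ V → FiniteDimensional ℝ Vn → Module.finrank ℝ Vn = n →
        (∀ f : H, p f ∈ Vn ∧ f - p f ∈ Vnᗮ) →
        ∑' j : ℕ, lam j - ∑ j ∈ Finset.range n, lamV j ≤ ∫ x, ‖k x - p (k x)‖ ^ 2 ∂μ) ∧
      (∀ p : H →ₗ[ℝ] H,
        (∀ f : H, p f ∈ Submodule.span ℝ (u '' Set.Iio n) ∧
            f - p f ∈ (Submodule.span ℝ (u '' Set.Iio n))ᗮ) →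
        ∫ x, ‖k x - p (k x)‖ ^ 2 ∂μ = ∑' j : ℕ, lam j - ∑ j ∈ Finset.range n, lamV j) ∧
      (∀ p : H →ₗ[ℝ] H,
        (∀ f : H, p f ∈ V ∧ f - p f ∈ Vᗮ) →
        ∫ x, ‖k x - p (k x)‖ ^ 2 ∂μ
          = ∑' j : ℕ, lam j - ∑' j : {j : ℕ // (j : ℕ∞) < m}, lamV j) := by
  have hnS : ∀ j, j < n → (j : ℕ∞) < m := fun j hj => lt_of_lt_of_le (Nat.cast_lt.2 hj) hn
  have hproj : ∀ (W : Submodule ℝ H) [W.HasOrthogonalProjection] (p : H →ₗ[ℝ] H),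
      (∀ f, p f ∈ W ∧ f - p f ∈ Wᗮ) → ∀ f, p f = W.starProjection f :=
    fun W _ p hp f => (W.eq_starProjection_of_mem_orthogonal (hp f).1 (hp f).2).symm
  set b := HilbertBasis.mk he hdense.ge
  have hb : ∀ j, ‖ι (b j)‖ ^ 2 = lam j := fun j => by
    rw [← real_inner_self_eq_norm_sq, HilbertBasis.coe_mk, heig, if_pos rfl]
  have hintegral : ∀ (K : Submodule ℝ H) [CompleteSpace K] {I : Type} [Countable I]
      (c : HilbertBasis I ℝ K), ∫ x, ‖k x - K.starProjection (k x)‖ ^ 2 ∂μ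
        = ∑' j, lam j - ∑' i, ‖ι (c i)‖ ^ 2 := fun K _ I _ c => by
    simpa only [hb] using integral_norm_sq_sub_starProjection hι b (by simpa only [hb]) K c
  have : CompleteSpace V := hVc.completeSpace_coe
  obtain ⟨cV, hcV⟩ := exists_hilbertBasis_restrict_of_inner_eq_ite (s := {j : ℕ | (j : ℕ∞) < m})
    (fun i hi j hj => huon i j hi hj) huspan
  refine ⟨fun Vn p hVn _ hrank hp => ?_, fun p hp => ?_, fun p hp => ?_⟩
  · set c := (stdOrthonormalBasis ℝ Vn).toHilbertBasis
    rw [funext (hproj Vn p hp), hintegral Vn c, tsum_fintype (fun i => ‖ι (c i)‖ ^ 2)]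
    exact sub_le_sub_left (cV.sum_norm_sq_apply_le_sum_range ι
      (fun i j => by simpa [hcV, Subtype.ext_iff] using hlamV i j i.2 j.2) hlamVmono hn
      (by rw [Fintype.card_fin, hrank]) (c.orthonormal.comp_linearIsometry Vn.subtypeₗᵢ)
      fun i => hVn (c i).2) _
  · set W := Submodule.span ℝ (u '' Set.Iio n)
    have : FiniteDimensional ℝ W := FiniteDimensional.span_of_finite ℝ ((Set.finite_Iio n).image u)
    obtain ⟨c, hc⟩ := exists_hilbertBasis_restrict_of_inner_eq_ite (K := W) (s := Set.Iio n)
      (fun i hi j hj => huon i j (hnS i hi) (hnS j hj))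
      W.closed_of_finiteDimensional.submodule_topologicalClosure_eq
    have hdiag : ∀ j : Set.Iio n, ‖ι (c j)‖ ^ 2 = lamV j := fun j => by
      rw [← real_inner_self_eq_norm_sq, hc, hlamV j j (hnS j j.2) (hnS j j.2), if_pos rfl]
    rw [funext (hproj W p hp), hintegral W c, tsum_congr hdiag, ← Finset.coe_range,
      Finset.tsum_subtype']
  · rw [funext (hproj V p hp), hintegral V cV]
    congr 1
    exact tsum_congr fun j => by
      rw [← real_inner_self_eq_norm_sq, hcV, hlamV j j j.2 j.2, if_pos rfl]

/-- Assume `Σ_j λ_j < ∞`. Let `V ⊆ H` be a closed subspace of dimension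
`m` (possibly infinite), with an `H`-orthonormal basis `(u_j)_{j < m}` of `V` satisfying
`⟪ι u_i, ι u_j⟫_{L²} = λ_{j,V} δ_{ij}` with `λ_{0,V} ≥ λ_{1,V} ≥ … > 0`. Then for every
`n ≤ m` and every `n`-dimensional subspace `V_n ⊆ V` with `H`-orthogonal projection `p`:
`∫ P_{V_n}² dμ ≥ Σ_j λ_j − Σ_{j<n} λ_{j,V}`, with equality when `V_n = span(u_0,…,u_{n-1})`;
in particular `∫ P_V² dμ = Σ_j λ_j − Σ_{j<m} λ_{j,V}`. -/
theorem stmt13 {H : Type*} [NormedAddCommGroup H] [InnerProductSpace ℝ H] [CompleteSpace H]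
    {Ω : Type*} [MeasurableSpace Ω] (μ : Measure Ω) (k : Ω → H)
    (ι : H →L[ℝ] Lp ℝ 2 μ)
    (hι : ∀ f : H, (ι f : Ω → ℝ) =ᵐ[μ] fun x => ⟪f, k x⟫_ℝ)
    (hinj : Function.Injective ι)
    (e : ℕ → H) (lam : ℕ → ℝ)
    (he : Orthonormal ℝ e)
    (hdense : (Submodule.span ℝ (Set.range e)).topologicalClosure = ⊤)
    (hpos : ∀ j, 0 < lam j) (hmono : ∀ j, lam (j + 1) ≤ lam j)
    (heig : ∀ i j, ⟪ι (e i), ι (e j)⟫_ℝ = if i = j then lam j else 0)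
    (hsum : Summable lam)
    (V : Submodule ℝ H) (hVc : IsClosed (V : Set H))
    (m : ℕ∞) (u : ℕ → H) (lamV : ℕ → ℝ)
    (humem : ∀ j : ℕ, (j : ℕ∞) < m → u j ∈ V)
    (huon : ∀ i j : ℕ, (i : ℕ∞) < m → (j : ℕ∞) < m →
      ⟪u i, u j⟫_ℝ = if i = j then 1 else 0)
    (huspan : (Submodule.span ℝ (u '' {j : ℕ | (j : ℕ∞) < m})).topologicalClosure = V)
    (hlamV : ∀ i j : ℕ, (i : ℕ∞) < m → (j : ℕ∞) < m →
      ⟪ι (u i), ι (u j)⟫_ℝ = if i = j then lamV j else 0)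
    (hlamVpos : ∀ j : ℕ, (j : ℕ∞) < m → 0 < lamV j)
    (hlamVmono : ∀ j : ℕ, ((j + 1 : ℕ) : ℕ∞) < m → lamV (j + 1) ≤ lamV j)
    (n : ℕ) (hn : (n : ℕ∞) ≤ m) :
    (∀ (Vn : Submodule ℝ H) (p : H →ₗ[ℝ] H),
        Vn ≤ V → FiniteDimensional ℝ Vn → Module.finrank ℝ Vn = n →
        (∀ f : H, p f ∈ Vn ∧ f - p f ∈ Vnᗮ) →
        ∑' j : ℕ, lam j - ∑ j ∈ Finset.range n, lamV j ≤ ∫ x, ‖k x - p (k x)‖ ^ 2 ∂μ) ∧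
      (∀ p : H →ₗ[ℝ] H,
        (∀ f : H, p f ∈ Submodule.span ℝ (u '' Set.Iio n) ∧
            f - p f ∈ (Submodule.span ℝ (u '' Set.Iio n))ᗮ) →
        ∫ x, ‖k x - p (k x)‖ ^ 2 ∂μ = ∑' j : ℕ, lam j - ∑ j ∈ Finset.range n, lamV j) ∧
      (∀ p : H →ₗ[ℝ] H,
        (∀ f : H, p f ∈ V ∧ f - p f ∈ Vᗮ) →
        ∫ x, ‖k x - p (k x)‖ ^ 2 ∂μ
          = ∑' j : ℕ, lam j - ∑' j : {j : ℕ // (j : ℕ∞) < m}, lamV j) :=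
  stmt13_general μ k ι hι e lam he hdense heig hsum V hVc m u lamV huon huspan hlamV hlamVmono n hn
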